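/- arXiv:1310.1765 — 2 statements merged into one kernel-verified Lean document; each statement's English description precedes it below -/
import Mathlib

section
/- If L/F is unramified, then v_L(β) = 0 and v(a) = 0. If L/F is ramified, then v_L(β) = v(a) and v(a) ∈ {0, 1}. -/
/-!
The root `β` and its conjugate `β' = b/c - β` are integral with `β β' = a/c`, so
`v_L(β) + v_L(β') = e · v(a)` where `e` is the ramification index. Since `𝔬_L = 𝔬 + 𝔬 β`, no
translate `β - u` with `u ∈ F` is divisible by `ϖ` in `𝔬_L`; applied to `β` and `β'` this gives
`0 ≤ v_L(β), v_L(β') < e`. For `e = 1` everything vanishes; for `e = 2` both valuations lie in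
`{0, 1}` and have even sum, hence both equal `v(a)`.
-/

noncomputable section

abbrev Zm0 : Type := WithZero (Multiplicative ℤ)

/-- `ev n` is the value (in `ℤₘ₀ = WithZero (Multiplicative ℤ)`) of an element of additive
valuation `n`; thus `x ∈ 𝔭^n` iff `v x ≤ ev n`, `x ∈ 𝔬` iff `v x ≤ ev 0`, `x ∈ 𝔬^×` iff
`v x = ev 0`, and "v(x) = n" (additively) iff `v x = ev n`. -/
def ev (n : ℤ) : Zm0 := ((Multiplicative.ofAdd (-n) : Multiplicative ℤ) : Zm0)

lemma ev_eq_exp (n : ℤ) : ev n = WithZero.exp (-n) := rfl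

@[simp] lemma ev_zero : ev 0 = 1 := rfl

lemma ev_add (m n : ℤ) : ev (m + n) = ev m * ev n := by
  simp only [ev_eq_exp, neg_add, WithZero.exp_add]

lemma ev_natCast_mul (k : ℕ) (n : ℤ) : ev (k * n) = ev n ^ k := by
  simp only [ev_eq_exp, ← WithZero.exp_nsmul, nsmul_eq_mul, mul_neg]

@[simp] lemma ev_le_ev {m n : ℤ} : ev m ≤ ev n ↔ n ≤ m := by
  simp only [ev_eq_exp, WithZero.exp_le_exp, neg_le_neg_iff]

@[simp] lemma ev_lt_ev {m n : ℤ} : ev m < ev n ↔ n < m := by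
  simp only [ev_eq_exp, WithZero.exp_lt_exp, neg_lt_neg_iff]

@[simp] lemma ev_ne_zero (n : ℤ) : ev n ≠ 0 := WithZero.exp_ne_zero

lemma ev_injective : Function.Injective ev := fun _ _ h =>
  neg_injective (WithZero.exp_injective h)

lemma exists_eq_ev {x : Zm0} (hx : x ≠ 0) : ∃ n, x = ev n :=
  ⟨-WithZero.log x, by rw [ev_eq_exp, neg_neg, WithZero.exp_log hx]⟩

lemma exists_eq_ev_of_ev_lt_of_le {x : Zm0} {e : ℤ} (hlt : ev e < x) (hle : x ≤ 1) :
    ∃ k, 0 ≤ k ∧ k < e ∧ x = ev k := by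
  obtain ⟨k, rfl⟩ := exists_eq_ev (ne_bot_of_gt hlt)
  exact ⟨k, ev_le_ev.1 hle, ev_lt_ev.1 hlt, rfl⟩

section QuadraticExtension

variable {F L : Type*} [Field F] [Field L] [Algebra F L]

local notation "ι" => algebraMap F L

lemma quadratic_root_not_mem_range {a b c : F} (h2 : (2 : F) ≠ 0) (hc : c ≠ 0)
    (hnonsq : ∀ r : F, r ^ 2 ≠ b ^ 2 - 4 * (a * c))
    {sqd : L} (hsqd : sqd ^ 2 = ι (b ^ 2 - 4 * (a * c))) :
    (ι b + sqd) / (2 * ι c) ∉ Set.range ι := by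
  rintro ⟨u, hu⟩
  have h2c : (2 : L) * ι c ≠ 0 := by
    simpa [← map_ofNat ι 2, ← map_mul] using mul_ne_zero h2 hc
  have hsqd' : sqd = ι (2 * c * u - b) := by
    rw [eq_div_iff h2c] at hu
    simp only [map_sub, map_mul, map_ofNat]
    linear_combination -hu
  refine hnonsq (2 * c * u - b) (FaithfulSMul.algebraMap_injective F L ?_)
  rw [map_pow, ← hsqd', hsqd]

lemma quadratic_root_mul_conj {a b c : F} (h2 : (2 : F) ≠ 0) (hc : c ≠ 0)
    {sqd : L} (hsqd : sqd ^ 2 = ι (b ^ 2 - 4 * (a * c))) :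
    (ι b + sqd) / (2 * ι c) * (ι (b / c) - (ι b + sqd) / (2 * ι c)) = ι (a / c) := by
  have h2L : (2 : L) ≠ 0 := by simpa [← map_ofNat ι 2] using h2
  have hcL : ι c ≠ 0 := by simpa using hc
  simp only [map_sub, map_pow, map_mul, map_ofNat] at hsqd
  rw [map_div₀, map_div₀]
  field_simp
  linear_combination -hsqd

variable {Γ₀ Γ₀' : Type*} [LinearOrderedCommGroupWithZero Γ₀] [LinearOrderedCommGroupWithZero Γ₀']

/- Otherwise `β - u = π (s + t β)` with `s, t ∈ 𝔬`, and `β = (π s + u) / (1 - π t)` would lie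
in `F`. -/
lemma valuation_algebraMap_lt_valuation_sub (v : Valuation F Γ₀) (vL : Valuation L Γ₀')
    {β : L} (hβ : β ∉ Set.range ι)
    (hbasis : ∀ z, vL z ≤ 1 → ∃ s t : F, v s ≤ 1 ∧ v t ≤ 1 ∧ z = ι s + ι t * β)
    {π : F} (hπ0 : π ≠ 0) (hπ : v π < 1) (u : F) :
    vL (ι π) < vL (β - ι u) := by
  by_contra! hle
  have hπL : ι π ≠ 0 := by simpa using hπ0
  obtain ⟨s, t, -, ht, hst⟩ := hbasis ((β - ι u) / ι π) <| by
    rwa [map_div₀, div_le_one₀ (vL.pos_iff.2 hπL)]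
  have hunit : (1 : F) - t * π ≠ 0 := by
    refine sub_ne_zero.2 fun h => ?_
    have : v (t * π) < 1 := by
      rw [map_mul]; exact (mul_le_of_le_one_left' ht).trans_lt hπ
    simp [← h] at this
  refine hβ ⟨(π * s + u) / (1 - t * π), ?_⟩
  rw [div_eq_iff hπL] at hst
  rw [map_div₀, div_eq_iff ((map_ne_zero ι).2 hunit)]
  simp only [map_add, map_sub, map_mul, map_one]
  linear_combination -hst

end QuadraticExtension

theorem stmt0_general
    {F L : Type*} [Field F] [Field L] [CharZero F] [Algebra F L]
    (v : Valuation F Zm0) (vL : Valuation L Zm0)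
    (ϖ : F) (hϖ : v ϖ = ev 1)
    (a b c : F)
    (hbo : v b ≤ ev 0) (hc : v c = ev 0)
    (hnonsq : ∀ r : F, r ^ 2 ≠ b ^ 2 - 4 * (a * c))
    (sqd : L) (hsqd : sqd ^ 2 = algebraMap F L (b ^ 2 - 4 * (a * c)))
    (β : L) (hβ : β = (algebraMap F L b + sqd) / (2 * algebraMap F L c))
    -- {1, β} is an 𝔬-basis of 𝔬_L, i.e. 𝔬_L = 𝔬 + 𝔬·β :
    (hbasis : ∀ z : L, vL z ≤ ev 0 ↔
      ∃ s t : F, v s ≤ ev 0 ∧ v t ≤ ev 0 ∧ z = algebraMap F L s + algebraMap F L t * β)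
    -- v_L restricted to F is e·v for the ramification index e ≥ 1 :
    (hcomp : ∃ e : ℕ, 0 < e ∧ ∀ x : F, vL (algebraMap F L x) = (v x) ^ e) :
    (vL (algebraMap F L ϖ) = ev 1 → vL β = ev 0 ∧ v a = ev 0) ∧
    (vL (algebraMap F L ϖ) = ev 2 → vL β = v a ∧ (v a = ev 0 ∨ v a = ev 1)) := by
  obtain ⟨e, -, hvL⟩ := hcomp
  have hc0 : c ≠ 0 := fun h => by simp [h] at hc
  have hβF : β ∉ Set.range (algebraMap F L) := by
    rw [hβ]; exact quadratic_root_not_mem_range two_ne_zero hc0 hnonsq hsqd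
  have hprod : β * (algebraMap F L (b / c) - β) = algebraMap F L (a / c) := by
    rw [hβ]; exact quadratic_root_mul_conj two_ne_zero hc0 hsqd
  have hβint : vL β ≤ 1 := (hbasis β).2 ⟨0, 1, by simp, by simp, by simp⟩
  have hβ'int : vL (algebraMap F L (b / c) - β) ≤ 1 := by
    refine (vL.map_sub _ _).trans (max_le ?_ hβint)
    rw [hvL, map_div₀, hc, ev_zero, div_one]
    exact pow_le_one' hbo e
  have hϖL : vL (algebraMap F L ϖ) = ev e := by rw [hvL, hϖ, ← ev_natCast_mul, mul_one]
  have hϖ0 : ϖ ≠ 0 := fun h => ev_ne_zero 1 (by rw [← hϖ, h, map_zero])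
  have hdiv := valuation_algebraMap_lt_valuation_sub v vL hβF (fun z => (hbasis z).1) hϖ0
    (hϖ ▸ ev_lt_ev.2 one_pos)
  obtain ⟨k, hk0, hke, hk⟩ := exists_eq_ev_of_ev_lt_of_le (by simpa [hϖL] using hdiv 0) hβint
  obtain ⟨j, hj0, hje, hj⟩ := exists_eq_ev_of_ev_lt_of_le
    (by rw [← hϖL, ← neg_sub, vL.map_neg]; exact hdiv _) hβ'int
  have ha : a ≠ 0 := fun h => hnonsq b (by rw [h]; ring)
  obtain ⟨m, hm⟩ := exists_eq_ev ((v.ne_zero_iff).2 ha)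
  have hsum : k + j = e * m := ev_injective <| by
    rw [ev_add, ← hk, ← hj, ← map_mul, hprod, hvL, map_div₀, hc, ev_zero, div_one, hm,
      ev_natCast_mul]
  rw [hk, hm]
  refine ⟨fun h => ?_, fun h => ?_⟩ <;>
    obtain rfl : e = _ := by exact_mod_cast ev_injective (hϖL.symm.trans h)
  · constructor <;> congr 1 <;> omega
  · rw [show k = m by omega]
    rcases (by omega : m = 0 ∨ m = 1) with rfl | rfl
    exacts [⟨rfl, .inl rfl⟩, ⟨rfl, .inr rfl⟩]

/-- If L/F is unramified, then v_L(β) = 0 and v(a) = 0.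
If L/F is ramified, then v_L(β) = v(a) and v(a) ∈ {0, 1}.

Here F is a nonarchimedean local field of characteristic zero with normalized valuation `v`
(`v ϖ = 1` additively), a, b ∈ 𝔬, c ∈ 𝔬^×, d = b² − 4ac ≠ 0 is not a square in F,
L = F(√d) is the quadratic extension with normalized valuation `v_L`, β = (b + √d)/(2c),
and {1, β} is an 𝔬-basis of 𝔬_L.  "L/F unramified" means v_L(ϖ) = 1; "ramified" means
v_L(ϖ) = 2.  (The valuation `v_L` restricts to a multiple of `v` on F.) -/
theorem stmt0
    {F L : Type*} [Field F] [Field L] [CharZero F] [Algebra F L]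
    (v : Valuation F Zm0) (vL : Valuation L Zm0)
    (ϖ : F) (hϖ : v ϖ = ev 1)
    (ϖL : L) (hϖL : vL ϖL = ev 1)
    (a b c : F)
    (hao : v a ≤ ev 0) (hbo : v b ≤ ev 0) (hc : v c = ev 0)
    (hd0 : b ^ 2 - 4 * (a * c) ≠ 0)
    (hnonsq : ∀ r : F, r ^ 2 ≠ b ^ 2 - 4 * (a * c))
    (sqd : L) (hsqd : sqd ^ 2 = algebraMap F L (b ^ 2 - 4 * (a * c)))
    (hspan : ∀ z : L, ∃ s t : F, z = algebraMap F L s + algebraMap F L t * sqd)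
    (β : L) (hβ : β = (algebraMap F L b + sqd) / (2 * algebraMap F L c))
    -- {1, β} is an 𝔬-basis of 𝔬_L, i.e. 𝔬_L = 𝔬 + 𝔬·β :
    (hbasis : ∀ z : L, vL z ≤ ev 0 ↔
      ∃ s t : F, v s ≤ ev 0 ∧ v t ≤ ev 0 ∧ z = algebraMap F L s + algebraMap F L t * β)
    -- v_L restricted to F is e·v for the ramification index e ≥ 1 :
    (hcomp : ∃ e : ℕ, 0 < e ∧ ∀ x : F, vL (algebraMap F L x) = (v x) ^ e) :
    (vL (algebraMap F L ϖ) = ev 1 → vL β = ev 0 ∧ v a = ev 0) ∧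
    (vL (algebraMap F L ϖ) = ev 2 → vL β = v a ∧ (v a = ev 0 ∨ v a = ev 1)) :=
  stmt0_general v vL ϖ hϖ a b c hbo hc hnonsq sqd hsqd β hβ hbasis hcomp
end
end

section
/- Let r be an integer with r ≥ 1 and r > v(a), and assume a ≠ 0. Let x, y ∈ o be such that x² − bxy + acy² ∈ ϖ·o^× (i.e., det t(x,y) has valuation exactly 1). Then t(x,y) ∉ B(F)·K₂(p^r). -/
open scoped Pointwise
open Matrix

noncomputable section

variable {F : Type*} [Field F]

/-- the matrix t(x,y) = [[x, cy],[−ay, x−by]] -/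
def tmat (a b c x y : F) : Matrix (Fin 2) (Fin 2) F :=
  !![x, c * y; -(a * y), x - b * y]

/-- GL₂(𝔬) : integral entries and unit determinant -/
def GL2O (v : Valuation F Zm0) : Set (Matrix (Fin 2) (Fin 2) F) :=
  {g | (∀ i j, v (g i j) ≤ ev 0) ∧ v g.det = ev 0}

/-- K₂(𝔭ⁿ) = { g ∈ GL₂(𝔬) : g₁₁ ∈ 1 + 𝔭ⁿ, g₂₂ ∈ 1 + 𝔭ⁿ, g₂₁ ∈ 𝔭ⁿ } -/
def K2 (v : Valuation F Zm0) (n : ℕ) : Set (Matrix (Fin 2) (Fin 2) F) :=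
  {g | g ∈ GL2O v ∧ v (g 0 0 - 1) ≤ ev n ∧ v (g 1 1 - 1) ≤ ev n ∧ v (g 1 0) ≤ ev n}

/-- B(F): invertible upper triangular matrices -/
def BF (F : Type*) [Field F] : Set (Matrix (Fin 2) (Fin 2) F) :=
  {g | g 1 0 = 0 ∧ g.det ≠ 0}

/-!
In additive valuations: write `t(x,y) = p k` with `p ∈ B(F)` and `k ∈ K₂(𝔭^r)`. The lower rows give
`(-ay, x - by) = p₂₂ (k₂₁, k₂₂)` with `k₂₂` a unit and `k₂₁ ∈ 𝔭^r`, so `v(a) + v(y) ≥ r + v(x - by)`,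
and `r > v(a)` forces `v(y) > v(x - by)`. Hence `v(x) = v(x - by)`, and
`det t(x,y) = x (x - by) + acy²` has valuation `2 v(x - by)`, which is even and so cannot be `1`.
-/

lemma ev_lt_one {n : ℕ} (hn : 1 ≤ n) : ev n < 1 := by
  unfold ev
  rw [← WithZero.coe_one, WithZero.coe_lt_coe, ← ofAdd_zero, Multiplicative.ofAdd_lt]
  omega

lemma mul_self_ne_ev_one (u : Zm0) : u * u ≠ ev 1 := by
  induction u using WithZero.recZeroCoe with
  | zero => simp [ev]
  | coe u =>
    rw [ev, ← WithZero.coe_mul, Ne, WithZero.coe_inj]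
    intro h
    have := congrArg Multiplicative.toAdd h
    simp only [toAdd_mul, toAdd_ofAdd] at this
    omega

lemma mul_apply_one_of_apply_one_zero_eq_zero {R : Type*} [CommRing R]
    {p : Matrix (Fin 2) (Fin 2) R} (hp : p 1 0 = 0) (k : Matrix (Fin 2) (Fin 2) R) (j : Fin 2) :
    (p * k) 1 j = p 1 1 * k 1 j := by
  simp [mul_apply, Fin.sum_univ_two, hp]

lemma lower_row_bound_of_mem_BF_mul_K2 {v : Valuation F Zm0} {r : ℕ} (hr : 1 ≤ r)
    {g : Matrix (Fin 2) (Fin 2) F} (hg : g ∈ BF F * K2 v r) :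
    g 1 1 ≠ 0 ∧ v (g 1 0) ≤ ev r * v (g 1 1) := by
  obtain ⟨p, ⟨hp10, hpdet⟩, k, ⟨-, -, hk11, hk10⟩, rfl⟩ := Set.mem_mul.mp hg
  have hp11 : p 1 1 ≠ 0 := by
    intro h
    exact hpdet (by simp [det_fin_two, hp10, h])
  have hk11v : v (k 1 1) = 1 := by
    simpa using v.map_eq_of_sub_lt (x := 1) (by simpa using hk11.trans_lt (ev_lt_one hr))
  rw [mul_apply_one_of_apply_one_zero_eq_zero hp10, mul_apply_one_of_apply_one_zero_eq_zero hp10]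
  refine ⟨mul_ne_zero hp11 fun h => by simp [h] at hk11v, ?_⟩
  rw [map_mul, map_mul, hk11v, mul_one, mul_comm (ev r)]
  exact mul_le_mul_right hk10 _

lemma Valuation.map_normForm_eq_mul_self {R Γ₀ : Type*} [CommRing R]
    [LinearOrderedCommGroupWithZero Γ₀] (v : Valuation R Γ₀) {a b c x y : R}
    (ha : v a ≤ 1) (hb : v b ≤ 1) (hc : v c ≤ 1) (hy : v y < v (x - b * y)) :
    v (x ^ 2 - b * x * y + a * c * y ^ 2) = v (x - b * y) * v (x - b * y) := by
  have hby : v (b * y) < v (x - b * y) :=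
    (map_mul v b y ▸ mul_le_of_le_one_left zero_le hb).trans_lt hy
  have hx : v x = v (x - b * y) := v.map_eq_of_sub_lt (by simpa using hby)
  have hacy : v (a * c * y ^ 2) < v (x * (x - b * y)) := by
    calc v (a * c * y ^ 2) = v a * v c * (v y * v y) := by simp [sq]
      _ ≤ v y * v y := mul_le_of_le_one_left zero_le (mul_le_one' ha hc)
      _ < v (x - b * y) * v (x - b * y) := mul_self_lt_mul_self zero_le hy
      _ = v (x * (x - b * y)) := by rw [map_mul, hx]
  rw [show x ^ 2 - b * x * y + a * c * y ^ 2 = x * (x - b * y) + a * c * y ^ 2 by ring,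
    v.map_add_eq_of_lt_left hacy, map_mul, hx]

theorem stmt3_general
    (v : Valuation F Zm0)
    (a b c : F)
    (hao : v a ≤ ev 0) (hbo : v b ≤ ev 0) (hc : v c = ev 0)
    (r : ℕ) (hr : 1 ≤ r) (hra : ev r < v a)
    (x y : F)
    (hdet : v (x ^ 2 - b * x * y + a * c * y ^ 2) = ev 1) :
    tmat a b c x y ∉ BF F * K2 v r := by
  intro hmem
  obtain ⟨hne, hle⟩ := lower_row_bound_of_mem_BF_mul_K2 hr hmem
  simp only [tmat, of_apply, cons_val', cons_val_zero, cons_val_one, empty_val',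
    cons_val_fin_one] at hne hle
  have hy : v y < v (x - b * y) := by
    refine lt_of_mul_lt_mul_left' (a := v a) ?_
    calc v a * v y = v (-(a * y)) := by simp
      _ ≤ ev r * v (x - b * y) := hle
      _ < v a * v (x - b * y) := mul_lt_mul_of_pos_right hra (zero_lt_iff.2 (v.ne_zero_iff.2 hne))
  exact mul_self_ne_ev_one _ ((v.map_normForm_eq_mul_self hao hbo hc.le hy).symm.trans hdet)

/-- Let r ≥ 1 with r > v(a), a ≠ 0.  Let x, y ∈ 𝔬 with
v(x² − bxy + acy²) = 1 (i.e. det t(x,y) ∈ ϖ·𝔬^×).  Then t(x,y) ∉ B(F)·K₂(𝔭^r).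
(Note `ev r < v a` says, additively, v(a) < r.) -/
theorem stmt3
    (v : Valuation F Zm0) (ϖ : F) (hϖ : v ϖ = ev 1)
    (a b c : F)
    (hao : v a ≤ ev 0) (hbo : v b ≤ ev 0) (hc : v c = ev 0)
    (hd0 : b ^ 2 - 4 * (a * c) ≠ 0)
    (ha0 : a ≠ 0)
    (r : ℕ) (hr : 1 ≤ r) (hra : ev r < v a)
    (x y : F) (hx : v x ≤ ev 0) (hy : v y ≤ ev 0)
    (hdet : v (x ^ 2 - b * x * y + a * c * y ^ 2) = ev 1) :
    tmat a b c x y ∉ BF F * K2 v r :=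
  stmt3_general v a b c hao hbo hc r hr hra x y hdet
end
end
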